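/- arXiv:0903.3481 — 2 statements merged into one kernel-verified Lean document; each statement's English description precedes it below -/
import Mathlib

section
/- Let p be a prime and T a free Z[ζ_p]-module of rank m, viewed as a Z-lattice with the property that pT* ⊂ T where T* is the dual lattice (T is p-elementary with discriminant group (Z/p)^a). If the isometry σ (multiplication by ζ_p) acts trivially on T*/T, then a ≤ m. -/
/-! For `x ∈ T*` write `p x = ∑ c i j • b (i, j)` in `T`. As `σ x - x ∈ T`, the coordinates of
`σ (p x)` and of `p x` agree mod `p`; in the power basis `b (i, j) = ζ ^ j e_i` this says
`c i 0 ≡ -c i last` and `c i (j + 1) ≡ c i j - c i last`, so `c i j ≡ -(j + 1) c i last`.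
Hence `x ↦ (c i last mod p)_i` is a homomorphism `T*/T → (ℤ/p)^m`, and it is injective: if all
`c i last` vanish mod `p`, then `p x ∈ p T`, i.e. `x ∈ T`. -/

theorem Fin.eq_neg_nsmul_of_recurrence {R : Type*} [AddCommGroup R] {n : ℕ} (hn : 0 < n)
    (c : Fin n → R) (h0 : c ⟨0, hn⟩ = -c ⟨n - 1, by omega⟩)
    (hsucc : ∀ j (h : j + 1 < n), c ⟨j + 1, h⟩ = c ⟨j, by omega⟩ - c ⟨n - 1, by omega⟩)
    (j : Fin n) : c j = -((j + 1 : ℕ) • c ⟨n - 1, by omega⟩) := by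
  obtain ⟨j, hj⟩ := j
  induction j with
  | zero => simpa using h0
  | succ j ih => rw [hsucc j hj, ih (by omega), succ_nsmul _ (j + 1)]; abel

theorem Fin.le_of_injective_pi {α : Type*} [Fintype α] (hα : 1 < Fintype.card α) {a m : ℕ}
    {f : (Fin a → α) → Fin m → α} (hf : Function.Injective f) : a ≤ m := by
  have := Fintype.card_le_of_injective f hf
  simp only [Fintype.card_pi, Finset.prod_const, Finset.card_univ, Fintype.card_fin] at this
  exact (Nat.pow_le_pow_iff_right hα).mp this

namespace Module.Basis

theorem exists_eq_smul_of_dvd_repr {M ι : Type*} [AddCommGroup M] [Fintype ι] (b : Basis ι ℤ M)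
    {q : ℤ} {y : M} (h : ∀ k, q ∣ b.repr y k) : ∃ z, y = q • z := by
  refine ⟨∑ k, (b.repr y k / q) • b k, ?_⟩
  conv_lhs => rw [← b.sum_repr y]
  simp only [Finset.smul_sum, smul_smul, Int.mul_ediv_cancel' (h _)]

/-- `b (i, j)` plays the role of `ζ ^ j • e i` in `ℤ[ζ] ^ m` and `s` that of multiplication by
`ζ`, where `ζ ^ n = -(1 + ζ + ⋯ + ζ ^ (n - 1))`; for `n = p - 1` this is `ℤ[ζ_p] ^ m`. -/
def IsCyclotomicPowerBasis {M : Type*} [AddCommGroup M] {m n : ℕ}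
    (b : Basis (Fin m × Fin n) ℤ M) (s : M →ₗ[ℤ] M) : Prop :=
  ∀ i j, s (b (i, j)) = if h : (j : ℕ) + 1 < n then b (i, ⟨j + 1, h⟩) else -∑ l, b (i, l)

namespace IsCyclotomicPowerBasis

variable {M : Type*} [AddCommGroup M] {m n : ℕ} {b : Basis (Fin m × Fin n) ℤ M}
  {s : M →ₗ[ℤ] M} (hs : b.IsCyclotomicPowerBasis s)
include hs

theorem repr_map_basis (i' i : Fin m) (j' j : Fin n) :
    b.repr (s (b (i', j'))) (i, j) =
      if i' = i then (if (j' : ℕ) + 1 = j then 1 else 0) - (if (j' : ℕ) + 1 = n then 1 else 0)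
      else 0 := by
  rw [hs]
  by_cases h : (j' : ℕ) + 1 < n
  · rw [dif_pos h, repr_self, Finsupp.single_apply]
    split_ifs <;> simp_all [Fin.ext_iff] <;> omega
  · rw [dif_neg h, map_neg, map_sum]
    by_cases hi : i' = i
    · subst hi
      simp [Finsupp.single_apply]
      omega
    · simp [hi]

theorem repr_map_apply_zero (hn : 0 < n) (y : M) (i : Fin m) :
    b.repr (s y) (i, ⟨0, hn⟩) = -b.repr y (i, ⟨n - 1, by omega⟩) := by
  have : b.coord (i, ⟨0, hn⟩) ∘ₗ s = -b.coord (i, ⟨n - 1, by omega⟩) := by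
    refine b.ext fun ⟨i', j'⟩ => ?_
    simp only [LinearMap.comp_apply, coord_apply, hs.repr_map_basis, LinearMap.neg_apply,
      repr_self]
    simp [Finsupp.single_apply, Fin.ext_iff]
    split_ifs <;> omega
  exact congr($this y)

theorem repr_map_apply_succ (y : M) (i : Fin m) (j : ℕ) (h : j + 1 < n) :
    b.repr (s y) (i, ⟨j + 1, h⟩) =
      b.repr y (i, ⟨j, by omega⟩) - b.repr y (i, ⟨n - 1, by omega⟩) := by
  have : b.coord (i, ⟨j + 1, h⟩) ∘ₗ s =
      b.coord (i, ⟨j, by omega⟩) - b.coord (i, ⟨n - 1, by omega⟩) := by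
    refine b.ext fun ⟨i', j'⟩ => ?_
    simp only [LinearMap.comp_apply, coord_apply, hs.repr_map_basis, LinearMap.sub_apply,
      repr_self]
    simp [Finsupp.single_apply, Fin.ext_iff]
    split_ifs <;> omega
  exact congr($this y)

theorem dvd_repr_of_dvd_repr_last (hn : 0 < n) {q : ℕ} {y t : M} (hy : s y - y = (q : ℤ) • t)
    (hlast : ∀ i, (q : ℤ) ∣ b.repr y (i, ⟨n - 1, by omega⟩)) (k : Fin m × Fin n) :
    (q : ℤ) ∣ b.repr y k := by
  have hmod (k) : (b.repr (s y) k : ZMod q) = b.repr y k := by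
    simp [← sub_eq_zero, ← Int.cast_sub, ← Finsupp.sub_apply, ← map_sub, hy]
  obtain ⟨i, j⟩ := k
  have hrec := Fin.eq_neg_nsmul_of_recurrence hn (fun j => (b.repr y (i, j) : ZMod q))
    (by simp [← hmod, hs.repr_map_apply_zero])
    (fun j h => by simp [← hmod, hs.repr_map_apply_succ]) j
  simp_rw [← ZMod.intCast_zmod_eq_zero_iff_dvd] at hlast ⊢
  simp [hrec, hlast]

end IsCyclotomicPowerBasis

theorem IsCyclotomicPowerBasis.mem_of_dvd_repr_last {V : Type*} [AddCommGroup V] [Module ℚ V]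
    {T : Submodule ℤ V} {m n q : ℕ} {b : Basis (Fin m × Fin n) ℤ T} {σ : V →ₗ[ℤ] V}
    {hσT : ∀ x ∈ T, σ x ∈ T} (hs : b.IsCyclotomicPowerBasis (σ.restrict hσT)) (hq : q ≠ 0)
    (hn : 0 < n) {x : V} (hqx : (q : ℤ) • x ∈ T) (hσx : σ x - x ∈ T)
    (hlast : ∀ i, (q : ℤ) ∣ b.repr ⟨(q : ℤ) • x, hqx⟩ (i, ⟨n - 1, by omega⟩)) : x ∈ T := by
  have hy : σ.restrict hσT ⟨(q : ℤ) • x, hqx⟩ - ⟨(q : ℤ) • x, hqx⟩ = (q : ℤ) • ⟨σ x - x, hσx⟩ :=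
    Subtype.ext <| by simp [smul_sub]
  obtain ⟨z, hz⟩ := b.exists_eq_smul_of_dvd_repr (hs.dvd_repr_of_dvd_repr_last hn hy hlast)
  have hxz : (q : ℤ) • x = (q : ℤ) • (z : V) := congrArg Subtype.val hz
  rw [← Int.cast_smul_eq_zsmul ℚ, ← Int.cast_smul_eq_zsmul ℚ, Int.cast_natCast] at hxz
  rw [smul_right_injective V (Nat.cast_ne_zero.mpr hq) hxz]
  exact z.2

end Module.Basis

theorem discriminant_generators_bound_general (p m a : ℕ) (hp : p.Prime)
    (V : Type*) [AddCommGroup V] [Module ℚ V]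
    (T Tstar : Submodule ℤ V)
    (σ : V →ₗ[ℚ] V)
    (hσT : ∀ x ∈ T, σ x ∈ T)
    (b : Module.Basis (Fin m × Fin (p - 1)) ℤ T)
    (hb : ∀ (i : Fin m) (j : Fin (p - 1)),
      σ (b (i, j) : V) =
        if h : (j : ℕ) + 1 < p - 1 then (b (i, ⟨(j : ℕ) + 1, h⟩) : V)
        else -∑ l : Fin (p - 1), (b (i, l) : V))
    (hpTs : ∀ x ∈ Tstar, (p : ℚ) • x ∈ T)
    (htriv : ∀ x ∈ Tstar, σ x - x ∈ T)
    (e : (Tstar ⧸ T.comap Tstar.subtype) ≃ₗ[ℤ] (Fin a → ZMod p)) :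
    a ≤ m := by
  have := Fact.mk hp
  have hn : 0 < p - 1 := by have := hp.two_le; omega
  have hs : b.IsCyclotomicPowerBasis ((σ.restrictScalars ℤ).restrict hσT) := fun i j => by
    apply Subtype.ext
    change σ (b (i, j) : V) = _
    rw [hb]
    split_ifs <;> simp
  have hpT (x : Tstar) : (p : ℤ) • (x : V) ∈ T := by
    simpa [← Nat.cast_smul_eq_nsmul ℚ] using hpTs x x.2
  let G : Tstar →ₗ[ℤ] Fin m → ZMod p := LinearMap.pi (fun i =>
      (Int.castAddHom (ZMod p)).toIntLinearMap ∘ₗ b.coord (i, ⟨p - 1 - 1, by omega⟩)) ∘ₗ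
    ((p : ℤ) • Tstar.subtype).codRestrict T hpT
  have hker : T.comap Tstar.subtype = LinearMap.ker G := by
    ext x
    refine ⟨fun hx => funext fun i => ?_, fun hx => ?_⟩
    · change ((b.repr ((p : ℤ) • ⟨x, hx⟩) (i, _) : ℤ) : ZMod p) = 0
      simp
    · refine hs.mem_of_dvd_repr_last hp.ne_zero hn (hpT x) (htriv x x.2) fun i => ?_
      exact (ZMod.intCast_zmod_eq_zero_iff_dvd _ _).mp (congrFun hx i)
  exact Fin.le_of_injective_pi (by simpa using hp.one_lt)
    ((LinearMap.ker_eq_bot.mp (Submodule.ker_liftQ_eq_bot' _ G hker)).comp e.symm.injective)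

/-- Let `T ⊂ T*` be lattices in a rational vector space `V`, with `T` a free
`ℤ[ζ_p]`-module of rank `m` via an isometry `σ` (encoded by the action of `σ` on a
`ℤ`-basis of `T` indexed by `Fin m × Fin (p-1)`), with `p T* ⊆ T` (so the discriminant
group `T*/T` is `p`-elementary, say isomorphic to `(ℤ/p)^a`). If `σ` acts trivially on
`T*/T`, then `a ≤ m`. -/
theorem discriminant_generators_bound (p m a : ℕ) (hp : p.Prime)
    (V : Type*) [AddCommGroup V] [Module ℚ V]
    (T Tstar : Submodule ℤ V) (hTT : T ≤ Tstar)
    (σ : V →ₗ[ℚ] V)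
    (hσT : ∀ x ∈ T, σ x ∈ T) (hσTs : ∀ x ∈ Tstar, σ x ∈ Tstar)
    (b : Module.Basis (Fin m × Fin (p - 1)) ℤ T)
    (hb : ∀ (i : Fin m) (j : Fin (p - 1)),
      σ (b (i, j) : V) =
        if h : (j : ℕ) + 1 < p - 1 then (b (i, ⟨(j : ℕ) + 1, h⟩) : V)
        else -∑ l : Fin (p - 1), (b (i, l) : V))
    (hpTs : ∀ x ∈ Tstar, (p : ℚ) • x ∈ T)
    (htriv : ∀ x ∈ Tstar, σ x - x ∈ T)
    (e : (Tstar ⧸ T.comap Tstar.subtype) ≃ₗ[ℤ] (Fin a → ZMod p)) :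
    a ≤ m :=
  discriminant_generators_bound_general p m a hp V T Tstar σ hσT b hb hpTs htriv e
end

section
/- With ζ a primitive 7th root of unity, the vector v = (-1+ζ²+ζ⁴-ζ⁵)e₁ + (ζ³-1)f₁ + (ζ-ζ⁵)e₂ + (ζ²-ζ⁵)f₂ + x + (1+ζ⁵)y is an eigenvector of ρ₀ (ℂ-linearly extended) with eigenvalue ζ, and the Gram pairing satisfies (v, v̄) = 7(ζ + ζ⁶). -/
/-!
Both identities are polynomial identities in `ζ` that hold modulo `1 + ζ + ⋯ + ζ⁶`, the
minimal polynomial of a primitive 7th root of unity, so they hold in every commutative ring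
in which this relation holds.
-/

open Matrix

section

variable {R : Type*} [Ring R]

def rho0 : Matrix (Fin 6) (Fin 6) R :=
  !![1, 2, 0, 0, 1, 3;
     1, 0, -1, -1, 2, -1;
     1, 1, 1, 1, -1, 4;
     1, 2, 1, 0, 1, 3;
     0, 0, 1, 0, -1, 1;
     -1, -1, 0, 0, -1, -2]

def gramUUK7 : Matrix (Fin 6) (Fin 6) R :=
  !![0, 1, 0, 0, 0, 0;
     1, 0, 0, 0, 0, 0;
     0, 0, 0, 1, 0, 0;
     0, 0, 1, 0, 0, 0;
     0, 0, 0, 0, -2, 1;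
     0, 0, 0, 0, 1, -4]

def rho0Eigenvector (ζ : R) : Fin 6 → R :=
  ![-1 + ζ ^ 2 + ζ ^ 4 - ζ ^ 5, ζ ^ 3 - 1, ζ - ζ ^ 5, ζ ^ 2 - ζ ^ 5, 1, 1 + ζ ^ 5]

/-- `rho0Eigenvector` with `ζ` replaced by `ζ⁻¹ = ζ⁶`, exponents reduced mod 7. -/
def rho0EigenvectorConj (ζ : R) : Fin 6 → R :=
  ![-1 + ζ ^ 5 + ζ ^ 3 - ζ ^ 2, ζ ^ 4 - 1, ζ ^ 6 - ζ ^ 2, ζ ^ 5 - ζ ^ 2, 1, 1 + ζ ^ 2]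

end

section

variable {R : Type*} [CommRing R] {ζ : R}

theorem rho0_mulVec_rho0Eigenvector (h : 1 + ζ + ζ ^ 2 + ζ ^ 3 + ζ ^ 4 + ζ ^ 5 + ζ ^ 6 = 0) :
    rho0 *ᵥ rho0Eigenvector ζ = ζ • rho0Eigenvector ζ := by
  ext i
  fin_cases i <;> simp [rho0, rho0Eigenvector, mulVec, dotProduct, Fin.sum_univ_six]
  · linear_combination h
  · ring
  · linear_combination h
  · linear_combination h
  · linear_combination -h

theorem rho0Eigenvector_dotProduct_gramUUK7_mulVec_conj
    (h : 1 + ζ + ζ ^ 2 + ζ ^ 3 + ζ ^ 4 + ζ ^ 5 + ζ ^ 6 = 0) :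
    rho0Eigenvector ζ ⬝ᵥ gramUUK7 *ᵥ rho0EigenvectorConj ζ = 7 * (ζ + ζ ^ 6) := by
  simp [gramUUK7, rho0Eigenvector, rho0EigenvectorConj, mulVec, dotProduct, Fin.sum_univ_six]
  linear_combination (-2 - 5 * ζ + 4 * ζ ^ 2 - ζ ^ 5) * h

end

/-- For a primitive 7th root of unity `ζ`, the vector
`v = (-1+ζ²+ζ⁴-ζ⁵)e₁ + (ζ³-1)f₁ + (ζ-ζ⁵)e₂ + (ζ²-ζ⁵)f₂ + x + (1+ζ⁵)y`
is an eigenvector of `ρ₀` with eigenvalue `ζ`, and `(v, v̄) = 7(ζ + ζ⁶)` for the Gram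
form of `U ⊕ U ⊕ K₇`. -/
theorem rho0_eigenvector_and_pairing (ζ : ℂ) (hζ : IsPrimitiveRoot ζ 7) :
    (!![1, 2, 0, 0, 1, 3;
        1, 0, -1, -1, 2, -1;
        1, 1, 1, 1, -1, 4;
        1, 2, 1, 0, 1, 3;
        0, 0, 1, 0, -1, 1;
        -1, -1, 0, 0, -1, -2] : Matrix (Fin 6) (Fin 6) ℂ).mulVec
      ![-1 + ζ ^ 2 + ζ ^ 4 - ζ ^ 5, ζ ^ 3 - 1, ζ - ζ ^ 5, ζ ^ 2 - ζ ^ 5, 1, 1 + ζ ^ 5] =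
      ζ • ![-1 + ζ ^ 2 + ζ ^ 4 - ζ ^ 5, ζ ^ 3 - 1, ζ - ζ ^ 5, ζ ^ 2 - ζ ^ 5, 1,
        1 + ζ ^ 5] ∧
    ![-1 + ζ ^ 2 + ζ ^ 4 - ζ ^ 5, ζ ^ 3 - 1, ζ - ζ ^ 5, ζ ^ 2 - ζ ^ 5, 1, 1 + ζ ^ 5] ⬝ᵥ
      (!![0, 1, 0, 0, 0, 0;
          1, 0, 0, 0, 0, 0;
          0, 0, 0, 1, 0, 0;
          0, 0, 1, 0, 0, 0;
          0, 0, 0, 0, -2, 1;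
          0, 0, 0, 0, 1, -4] : Matrix (Fin 6) (Fin 6) ℂ).mulVec
        ![-1 + ζ ^ 5 + ζ ^ 3 - ζ ^ 2, ζ ^ 4 - 1, ζ ^ 6 - ζ ^ 2, ζ ^ 5 - ζ ^ 2, 1,
          1 + ζ ^ 2] = 7 * (ζ + ζ ^ 6) := by
  have h : 1 + ζ + ζ ^ 2 + ζ ^ 3 + ζ ^ 4 + ζ ^ 5 + ζ ^ 6 = 0 := by
    simpa [Finset.sum_range_succ] using hζ.geom_sum_eq_zero (by norm_num)
  exact ⟨rho0_mulVec_rho0Eigenvector h, rho0Eigenvector_dotProduct_gramUUK7_mulVec_conj h⟩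
end
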